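/- In the setting of a directed index set ι with filter l, scale r_λ → +∞, and mutually absolutely continuous probability measures P_λ, P̂_λ with entropy production σ_λ := log(dP_λ/dP̂_λ): assume that I : ℝ → [0,+∞] is convex and lower semicontinuous, that the large-deviation lower bound liminf_λ r_λ^{−1} log P_λ(r_λ^{−1}σ_λ ∈ U) ≥ −inf_{s∈U} I(s) holds for every open U ⊆ ℝ, and that the entropic pressure e(α) := sup_{s∈ℝ}(αs − I(−s)) satisfies e(α) = lim_λ r_λ^{−1} log ∫ e^{−ασ_λ} dP_λ for every α ∈ [0,1]. Then the Chernoff exponents coincide: lim_λ r_λ^{−1} log(1 − ‖P_λ − P̂_λ‖_var) exists and equals −I(0) = inf_{α∈[0,1]} e(α). -/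

import Mathlib

/-!
Write `σ = log (dP/dP̂)`, so that `e^{-σ} = dP̂/dP` and `1 - ‖P - P̂‖_var = ∫ min(1, e^{-σ}) dP`.
For `α ∈ [0,1]` the integrand is at most `e^{-ασ}`, which bounds the upper Chernoff exponent by
`inf_{[0,1]} e`. On `{σ < r ε}` it is at least `e^{-r ε}`, so the large-deviation lower bound on
`(-∞, ε)` bounds the lower exponent below by `-I(0) - ε`.

It remains to see `inf_{[0,1]} e = -I(0)`; taking `s = 0` in the supremum gives `≥`. At `α = 0`
and `α = 1` the integrals `∫ e^{-ασ} dP` equal `1`, so `e(0) = e(1) = 0`: that is, `inf I = 0`,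
`I(t) + t ≥ 0` and `inf (I(t) + t) = 0`. Given `0 < c < I(0)`, separate `(0, c)` from the closed
convex epigraph of `I` by a line. These facts force the line to be non-vertical of slope `-α`
with `α ∈ [0,1]`, whence `I(t) + α t ≥ c` for all `t` and `e(α) ≤ -c`.
-/

open MeasureTheory Filter
open scoped ENNReal

/-- The entropy production observable of a pair of measures:
`σ(x) = log (dP/dQ)(x)`. -/
noncomputable def entropyProduction {Ω : Type*} [MeasurableSpace Ω]
    (P Q : Measure Ω) (x : Ω) : ℝ :=
  Real.log ((P.rnDeriv Q x).toReal)

/-- The total variation distance `‖P − Q‖_var = sup_Γ (P(Γ) − Q(Γ))`,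
the supremum running over measurable sets. -/
noncomputable def tvDist {Ω : Type*} [MeasurableSpace Ω] (P Q : Measure Ω) : ℝ≥0∞ :=
  ⨆ (Γ : Set Ω) (_ : MeasurableSet Γ), (P Γ - Q Γ)

open Set

section TotalVariation

variable {Ω : Type*} [MeasurableSpace Ω] {μ ν : Measure Ω}

lemma tvDist_eq_lintegral_one_sub_rnDeriv [IsFiniteMeasure μ] [SigmaFinite ν] (hνμ : ν ≪ μ) :
    tvDist μ ν = ∫⁻ x, (1 - ν.rnDeriv μ x) ∂μ := by
  have hg : Measurable (ν.rnDeriv μ) := Measure.measurable_rnDeriv ν μ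
  have hν {Γ : Set Ω} (hΓ : MeasurableSet Γ) : ∫⁻ x in Γ, ν.rnDeriv μ x ∂μ = ν Γ :=
    Measure.setLIntegral_rnDeriv' hνμ hΓ
  apply le_antisymm
  · refine iSup₂_le fun Γ hΓ => ?_
    calc μ Γ - ν Γ = ∫⁻ _ in Γ, 1 ∂μ - ∫⁻ x in Γ, ν.rnDeriv μ x ∂μ := by
          rw [setLIntegral_one, hν hΓ]
      _ ≤ ∫⁻ x in Γ, (1 - ν.rnDeriv μ x) ∂μ := lintegral_sub_le _ _ hg
      _ ≤ ∫⁻ x, (1 - ν.rnDeriv μ x) ∂μ := setLIntegral_le_lintegral _ _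
  · -- the supremum is attained on `{dν/dμ < 1}`, which supports the integrand
    set Γ₀ := {x | ν.rnDeriv μ x < 1}
    have hΓ₀ : MeasurableSet Γ₀ := measurableSet_lt hg measurable_const
    have hfin : ∫⁻ x in Γ₀, ν.rnDeriv μ x ∂μ ≠ ⊤ :=
      ne_top_of_le_ne_top (measure_ne_top μ Γ₀) <| by
        simpa using setLIntegral_mono' (f := ν.rnDeriv μ) hΓ₀ fun x hx => le_of_lt hx
    calc ∫⁻ x, (1 - ν.rnDeriv μ x) ∂μ = ∫⁻ x in Γ₀, (1 - ν.rnDeriv μ x) ∂μ :=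
          (setLIntegral_eq_of_support_subset fun x hx =>
            tsub_pos_iff_lt.1 (pos_iff_ne_zero.2 hx)).symm
      _ = μ Γ₀ - ν Γ₀ := by
          rw [lintegral_sub hg hfin ((ae_restrict_iff' hΓ₀).2 (ae_of_all _ fun x hx => le_of_lt hx)),
            setLIntegral_one, hν hΓ₀]
      _ ≤ tvDist μ ν := le_iSup₂ (f := fun Γ _ => μ Γ - ν Γ) Γ₀ hΓ₀

lemma measure_univ_sub_tvDist [IsFiniteMeasure μ] [SigmaFinite ν] (hνμ : ν ≪ μ) :
    μ univ - tvDist μ ν = ∫⁻ x, min 1 (ν.rnDeriv μ x) ∂μ := by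
  have hfin : ∫⁻ x, (1 - ν.rnDeriv μ x) ∂μ ≠ ⊤ :=
    ne_top_of_le_ne_top (measure_ne_top μ univ) <| by
      simpa using lintegral_mono (μ := μ) fun x => tsub_le_self (a := (1 : ℝ≥0∞))
  rw [tvDist_eq_lintegral_one_sub_rnDeriv hνμ, ← lintegral_one,
    ← lintegral_sub ((Measure.measurable_rnDeriv ν μ).const_sub 1) hfin
      (ae_of_all _ fun x => tsub_le_self)]
  refine lintegral_congr fun x => ?_
  rcases le_total (ν.rnDeriv μ x) 1 with h | h
  · rw [ENNReal.sub_sub_cancel ENNReal.one_ne_top h, min_eq_right h]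
  · rw [tsub_eq_zero_of_le h, tsub_zero, min_eq_left h]

lemma measurable_entropyProduction : Measurable (entropyProduction μ ν) :=
  Real.measurable_log.comp (Measure.measurable_rnDeriv μ ν).ennreal_toReal

lemma ofReal_exp_neg_entropyProduction_ae [SigmaFinite μ] [SigmaFinite ν] (hμν : μ ≪ ν) :
    ∀ᵐ x ∂μ, ENNReal.ofReal (Real.exp (-entropyProduction μ ν x)) = ν.rnDeriv μ x := by
  filter_upwards [Measure.rnDeriv_pos hμν, hμν.ae_le (Measure.rnDeriv_lt_top μ ν),
    Measure.inv_rnDeriv hμν] with x hpos hlt hinv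
  rw [entropyProduction, Real.exp_neg, Real.exp_log (ENNReal.toReal_pos hpos.ne' hlt.ne),
    ← ENNReal.toReal_inv, ENNReal.ofReal_toReal (ENNReal.inv_ne_top.2 hpos.ne'), ← hinv,
    Pi.inv_apply]

lemma lintegral_exp_neg_entropyProduction [SigmaFinite μ] [SigmaFinite ν] (hμν : μ ≪ ν)
    (hνμ : ν ≪ μ) :
    ∫⁻ x, ENNReal.ofReal (Real.exp (-entropyProduction μ ν x)) ∂μ = ν univ := by
  rw [lintegral_congr_ae (ofReal_exp_neg_entropyProduction_ae hμν),
    Measure.lintegral_rnDeriv hνμ]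

lemma one_sub_tvDist_eq_lintegral [IsProbabilityMeasure μ] [SigmaFinite ν] (hμν : μ ≪ ν)
    (hνμ : ν ≪ μ) :
    1 - tvDist μ ν
      = ∫⁻ x, ENNReal.ofReal (min 1 (Real.exp (-entropyProduction μ ν x))) ∂μ := by
  rw [← measure_univ (μ := μ), measure_univ_sub_tvDist hνμ]
  refine lintegral_congr_ae ?_
  filter_upwards [ofReal_exp_neg_entropyProduction_ae hμν] with x hx
  rw [ENNReal.ofReal_min, ENNReal.ofReal_one, hx]

lemma min_one_exp_neg_le_exp_neg_mul {α x : ℝ} (hα : α ∈ Icc (0 : ℝ) 1) :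
    min 1 (Real.exp (-x)) ≤ Real.exp (-α * x) := by
  rcases le_total 0 x with hx | hx
  · exact (min_le_right _ _).trans (Real.exp_le_exp.2 (by nlinarith [hα.2]))
  · exact (min_le_left _ _).trans (Real.one_le_exp (by nlinarith [hα.1]))

lemma exp_neg_le_min_one_exp_neg {c x : ℝ} (hc : 0 ≤ c) (hx : x ≤ c) :
    Real.exp (-c) ≤ min 1 (Real.exp (-x)) :=
  le_min (Real.exp_le_one_iff.2 (by linarith)) (Real.exp_le_exp.2 (by linarith))

lemma one_sub_tvDist_le_lintegral_exp [IsProbabilityMeasure μ] [SigmaFinite ν] (hμν : μ ≪ ν)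
    (hνμ : ν ≪ μ) {α : ℝ} (hα : α ∈ Icc (0 : ℝ) 1) :
    1 - tvDist μ ν ≤ ∫⁻ x, ENNReal.ofReal (Real.exp (-α * entropyProduction μ ν x)) ∂μ := by
  rw [one_sub_tvDist_eq_lintegral hμν hνμ]
  exact lintegral_mono fun x => ENNReal.ofReal_le_ofReal (min_one_exp_neg_le_exp_neg_mul hα)

lemma exp_neg_mul_measure_le_one_sub_tvDist [IsProbabilityMeasure μ] [SigmaFinite ν]
    (hμν : μ ≪ ν) (hνμ : ν ≪ μ) {c : ℝ} (hc : 0 ≤ c) :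
    ENNReal.ofReal (Real.exp (-c)) * μ {x | entropyProduction μ ν x < c} ≤ 1 - tvDist μ ν := by
  rw [one_sub_tvDist_eq_lintegral hμν hνμ, ← setLIntegral_const]
  refine (setLIntegral_mono ?_ fun x hx => ?_).trans (setLIntegral_le_lintegral _ _)
  · exact (measurable_const.min
      (Real.measurable_exp.comp measurable_entropyProduction.neg)).ennreal_ofReal
  · exact ENNReal.ofReal_le_ofReal (exp_neg_le_min_one_exp_neg hc (le_of_lt hx))

end TotalVariation

noncomputable def entropicPressure (I : ℝ → ℝ≥0∞) (α : ℝ) : EReal :=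
  ⨆ s : ℝ, ((α * s : ℝ) : EReal) - (I (-s) : EReal)

section EntropicPressure

variable {I : ℝ → ℝ≥0∞}

lemma neg_le_entropicPressure (α : ℝ) :
    -(I 0 : EReal) ≤ entropicPressure I α := by
  rw [entropicPressure]
  simpa using le_iSup (fun s : ℝ => ((α * s : ℝ) : EReal) - (I (-s) : EReal)) 0

lemma entropicPressure_le_neg_iff {α c : ℝ} :
    entropicPressure I α ≤ ((-c : ℝ) : EReal) ↔ ∀ t, I t ≠ ⊤ → c ≤ (I t).toReal + α * t := by
  rw [entropicPressure, iSup_le_iff, ← (Equiv.neg ℝ).forall_congr_right]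
  refine forall_congr' fun t => ?_
  simp only [Equiv.neg_apply, neg_neg]
  by_cases ht : I t = ⊤
  · simp [ht]
  · rw [← EReal.coe_ennreal_toReal ht, ← EReal.coe_sub, EReal.coe_le_coe_iff]
    simp only [ht, ne_eq, not_false_eq_true, forall_const]
    constructor <;> intro h <;> linarith

lemma exists_toReal_add_mul_lt {α δ : ℝ} (h : 0 ≤ entropicPressure I α) (hδ : 0 < δ) :
    ∃ t, I t ≠ ⊤ ∧ (I t).toReal + α * t < δ := by
  have hlt : ((-δ : ℝ) : EReal) < entropicPressure I α :=
    lt_of_lt_of_le (by exact_mod_cast neg_lt_zero.2 hδ) h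
  contrapose! hlt
  exact entropicPressure_le_neg_iff.2 hlt

lemma toReal_add_nonneg (h1 : entropicPressure I 1 ≤ 0) {t : ℝ} (ht : I t ≠ ⊤) :
    0 ≤ (I t).toReal + t := by
  simpa using (entropicPressure_le_neg_iff (α := 1) (c := 0)).1 (by simpa using h1) t ht

/-- The constraint `0 ≤ p.2` keeps this set convex despite the truncation in `ENNReal.ofReal`. -/
def realEpigraph (I : ℝ → ℝ≥0∞) : Set (ℝ × ℝ) :=
  {p | 0 ≤ p.2 ∧ I p.1 ≤ ENNReal.ofReal p.2}

lemma isClosed_realEpigraph (hI : LowerSemicontinuous I) : IsClosed (realEpigraph I) :=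
  (isClosed_le continuous_const continuous_snd).inter <| hI.isClosed_epigraph.preimage <|
    continuous_fst.prodMk (ENNReal.continuous_ofReal.comp continuous_snd)

lemma convex_realEpigraph
    (hI : ∀ x y p q : ℝ, 0 ≤ p → 0 ≤ q → p + q = 1 →
      I (p * x + q * y) ≤ ENNReal.ofReal p * I x + ENNReal.ofReal q * I y) :
    Convex ℝ (realEpigraph I) := by
  rintro ⟨x, y⟩ ⟨hy, hIx⟩ ⟨x', y'⟩ ⟨hy', hIx'⟩ p q hp hq hpq
  simp only [realEpigraph, Prod.smul_mk, Prod.mk_add_mk, smul_eq_mul]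
  refine ⟨by positivity, ?_⟩
  calc I (p * x + q * x') ≤ ENNReal.ofReal p * I x + ENNReal.ofReal q * I x' :=
        hI x x' p q hp hq hpq
    _ ≤ ENNReal.ofReal p * ENNReal.ofReal y + ENNReal.ofReal q * ENNReal.ofReal y' := by gcongr
    _ = ENNReal.ofReal (p * y + q * y') := by
        rw [ENNReal.ofReal_add (by positivity) (by positivity), ENNReal.ofReal_mul hp,
          ENNReal.ofReal_mul hq]

lemma exists_affine_separation
    (hIconv : ∀ x y p q : ℝ, 0 ≤ p → 0 ≤ q → p + q = 1 →
      I (p * x + q * y) ≤ ENNReal.ofReal p * I x + ENNReal.ofReal q * I y)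
    (hIlsc : LowerSemicontinuous I) {c : ℝ} (hc : ENNReal.ofReal c < I 0) :
    ∃ a b u : ℝ, b * c < u ∧ ∀ t, I t ≠ ⊤ → ∀ y, (I t).toReal ≤ y → u < a * t + b * y := by
  have hnotMem : ((0 : ℝ), c) ∉ realEpigraph I := fun h => h.2.not_gt hc
  obtain ⟨f, u, hfc, hf⟩ := geometric_hahn_banach_point_closed (convex_realEpigraph hIconv)
    (isClosed_realEpigraph hIlsc) hnotMem
  have hlin (t y : ℝ) : f (t, y) = f (1, 0) * t + f (0, 1) * y := by
    rw [show ((t, y) : ℝ × ℝ) = t • (1, 0) + y • (0, 1) by simp, map_add, map_smul, map_smul,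
      smul_eq_mul, smul_eq_mul, mul_comm t, mul_comm y]
  refine ⟨f (1, 0), f (0, 1), u, by simpa [hlin (0 : ℝ) c] using hfc, fun t ht y hy => ?_⟩
  have hmem : (t, y) ∈ realEpigraph I :=
    ⟨ENNReal.toReal_nonneg.trans hy,
      (ENNReal.ofReal_toReal ht).symm.le.trans (ENNReal.ofReal_le_ofReal hy)⟩
  simpa [hlin t y] using hf _ hmem

lemma affine_separation_coeff_pos (h0 : entropicPressure I 0 = 0)
    (h1 : entropicPressure I 1 = 0) {a b u c : ℝ} (hbc : b * c < u)
    (hsep : ∀ t, I t ≠ ⊤ → ∀ y, (I t).toReal ≤ y → u < a * t + b * y) : 0 < b := by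
  by_contra! hb
  rcases hb.lt_or_eq with hb | rfl
  · -- a negative `b` is refuted by points of the epigraph high above the graph
    obtain ⟨t, ht, -⟩ := exists_toReal_add_mul_lt h0.ge one_pos
    have hsept := hsep t ht _ (le_max_left (I t).toReal ((u - a * t) / b))
    have hy : b * max (I t).toReal ((u - a * t) / b) ≤ u - a * t :=
      calc _ ≤ b * ((u - a * t) / b) := mul_le_mul_of_nonpos_left (le_max_right _ _) hb.le
        _ = u - a * t := mul_div_cancel₀ _ hb.ne
    linarith
  · -- a vertical line `a * t = u` cannot separate, as `inf I = inf (I t + t) = 0`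
    have hu : 0 < u := by simpa using hbc
    have hat : ∀ t, I t ≠ ⊤ → u < a * t := fun t ht => by simpa using hsep t ht _ le_rfl
    obtain ⟨δ, hδ, haδ⟩ : ∃ δ > 0, |a| * δ < u := ⟨u / (|a| + 1), by positivity, by
      rw [mul_div_assoc', div_lt_iff₀ (by positivity)]
      linarith⟩
    rcases le_or_gt 0 a with ha | ha
    · obtain ⟨t, ht, hJ⟩ := exists_toReal_add_mul_lt h1.ge hδ
      rw [abs_of_nonneg ha] at haδ
      nlinarith [hat t ht, ENNReal.toReal_nonneg (a := I t)]
    · obtain ⟨t, ht, hJ⟩ := exists_toReal_add_mul_lt h0.ge hδ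
      rw [abs_of_neg ha] at haδ
      nlinarith [hat t ht, toReal_add_nonneg h1.le ht]

lemma mem_Icc_of_entropicPressure_le_neg (h0 : entropicPressure I 0 = 0)
    (h1 : entropicPressure I 1 = 0) {α c : ℝ} (hc : 0 < c)
    (hα : entropicPressure I α ≤ ((-c : ℝ) : EReal)) : α ∈ Icc (0 : ℝ) 1 := by
  have hkey := entropicPressure_le_neg_iff.1 hα
  constructor
  · by_contra! hneg
    obtain ⟨δ, hδ, hδc⟩ : ∃ δ > 0, δ * (1 - α) = c :=
      ⟨c / (1 - α), div_pos hc (by linarith), div_mul_cancel₀ _ (by linarith)⟩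
    obtain ⟨t, ht, hJ⟩ := exists_toReal_add_mul_lt h0.ge hδ
    have hαt : α * t < α * -δ :=
      mul_lt_mul_of_neg_left (by linarith [toReal_add_nonneg h1.le ht]) hneg
    linarith [hkey t ht]
  · by_contra! hgt
    obtain ⟨δ, hδ, hδc⟩ : ∃ δ > 0, δ * α = c :=
      ⟨c / α, div_pos hc (by linarith), div_mul_cancel₀ _ (by linarith)⟩
    obtain ⟨t, ht, hJ⟩ := exists_toReal_add_mul_lt h1.ge hδ
    have hαt : (α - 1) * t < (α - 1) * δ :=
      mul_lt_mul_of_pos_left (by linarith [ENNReal.toReal_nonneg (a := I t)]) (sub_pos.2 hgt)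
    linarith [hkey t ht]

lemma exists_entropicPressure_le_neg
    (hIconv : ∀ x y p q : ℝ, 0 ≤ p → 0 ≤ q → p + q = 1 →
      I (p * x + q * y) ≤ ENNReal.ofReal p * I x + ENNReal.ofReal q * I y)
    (hIlsc : LowerSemicontinuous I) (h0 : entropicPressure I 0 = 0)
    (h1 : entropicPressure I 1 = 0) {c : ℝ} (hc : 0 < c) (hcI : ENNReal.ofReal c < I 0) :
    ∃ α ∈ Icc (0 : ℝ) 1, entropicPressure I α ≤ ((-c : ℝ) : EReal) := by
  obtain ⟨a, b, u, hbc, hsep⟩ := exists_affine_separation hIconv hIlsc hcI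
  have hb := affine_separation_coeff_pos h0 h1 hbc hsep
  have hle : entropicPressure I (a / b) ≤ ((-c : ℝ) : EReal) :=
    entropicPressure_le_neg_iff.2 fun t ht => by
      have hsept := hsep t ht _ le_rfl
      rw [div_mul_eq_mul_div, ← sub_le_iff_le_add', le_div_iff₀ hb]
      linarith
  exact ⟨a / b, mem_Icc_of_entropicPressure_le_neg h0 h1 hc hle, hle⟩

theorem neg_eq_iInf_entropicPressure
    (hIconv : ∀ x y p q : ℝ, 0 ≤ p → 0 ≤ q → p + q = 1 →
      I (p * x + q * y) ≤ ENNReal.ofReal p * I x + ENNReal.ofReal q * I y)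
    (hIlsc : LowerSemicontinuous I) (h0 : entropicPressure I 0 = 0)
    (h1 : entropicPressure I 1 = 0) :
    -(I 0 : EReal) = ⨅ α ∈ Icc (0 : ℝ) 1, entropicPressure I α := by
  refine le_antisymm (le_iInf₂ fun α _ => neg_le_entropicPressure α) ?_
  refine EReal.le_of_forall_lt_iff_le.1 fun z hz => ?_
  rcases le_or_gt 0 z with hz0 | hz0
  · exact (iInf₂_le 0 ⟨le_rfl, zero_le_one⟩).trans (h0.trans_le (EReal.coe_nonneg.2 hz0))
  · have hzI : ENNReal.ofReal (-z) < I 0 := by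
      rw [← EReal.coe_ennreal_lt_coe_ennreal_iff, EReal.coe_ennreal_ofReal,
        max_eq_left (by linarith)]
      exact EReal.neg_lt_comm.1 hz
    obtain ⟨α, hα, hle⟩ :=
      exists_entropicPressure_le_neg hIconv hIlsc h0 h1 (neg_pos.2 hz0) hzI
    exact (iInf₂_le α hα).trans (by simpa using hle)

end EntropicPressure

lemma EReal.le_of_forall_pos_neg_add_le {x y : EReal}
    (h : ∀ ε : ℝ, 0 < ε → ((-ε : ℝ) : EReal) + x ≤ y) : x ≤ y := by
  refine EReal.ge_of_forall_gt_iff_ge.1 fun z hz => ?_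
  induction x using EReal.rec with
  | bot => simp at hz
  | top =>
    have h' := h 1 one_pos
    rw [EReal.coe_add_top, top_le_iff] at h'
    exact h' ▸ le_top
  | coe a =>
    have h' := h (a - z) (by linarith [EReal.coe_lt_coe_iff.1 hz])
    rwa [← EReal.coe_add, show -(a - z) + a = z by ring] at h'

section ScaledLog

variable {Ω : Type*} [MeasurableSpace Ω] {μ ν : Measure Ω} [IsProbabilityMeasure μ]
  [SigmaFinite ν] {r : ℝ}

lemma log_one_sub_tvDist_le_log_lintegral (hμν : μ ≪ ν) (hνμ : ν ≪ μ) (hr : 0 ≤ r) {α : ℝ}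
    (hα : α ∈ Icc (0 : ℝ) 1) :
    (r : EReal)⁻¹ * ENNReal.log (1 - tvDist μ ν)
      ≤ (r : EReal)⁻¹ * ENNReal.log
          (∫⁻ x, ENNReal.ofReal (Real.exp (-α * entropyProduction μ ν x)) ∂μ) :=
  mul_le_mul_of_nonneg_left (ENNReal.log_monotone (one_sub_tvDist_le_lintegral_exp hμν hνμ hα))
    (EReal.inv_nonneg_of_nonneg (EReal.coe_nonneg.2 hr))

lemma neg_add_log_measure_le_log_one_sub_tvDist (hμν : μ ≪ ν) (hνμ : ν ≪ μ) (hr : 0 < r)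
    {ε : ℝ} (hε : 0 ≤ ε) :
    ((-ε : ℝ) : EReal)
        + (r : EReal)⁻¹ * ENNReal.log (μ {x | r⁻¹ * entropyProduction μ ν x ∈ Iio ε})
      ≤ (r : EReal)⁻¹ * ENNReal.log (1 - tvDist μ ν) := by
  have hset : {x | r⁻¹ * entropyProduction μ ν x ∈ Iio ε}
      = {x | entropyProduction μ ν x < r * ε} := by
    ext x
    simp [inv_mul_lt_iff₀ hr]
  have hlog := ENNReal.log_monotone
    (exp_neg_mul_measure_le_one_sub_tvDist hμν hνμ (mul_nonneg hr.le hε))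
  rw [ENNReal.log_mul_add, ENNReal.log_ofReal_of_pos (Real.exp_pos _), Real.log_exp,
    ← hset] at hlog
  have hr' : (0 : EReal) ≤ (r : EReal)⁻¹ := EReal.inv_nonneg_of_nonneg (EReal.coe_nonneg.2 hr.le)
  calc _ = (r : EReal)⁻¹ * (((-(r * ε) : ℝ) : EReal)
          + ENNReal.log (μ {x | r⁻¹ * entropyProduction μ ν x ∈ Iio ε})) := by
        rw [EReal.left_distrib_of_nonneg_of_ne_top hr' (by simp [← EReal.coe_inv]),
          ← EReal.coe_inv, ← EReal.coe_mul, mul_neg, inv_mul_cancel_left₀ hr.ne']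
    _ ≤ _ := mul_le_mul_of_nonneg_left hlog hr'

end ScaledLog

lemma le_liminf_log_one_sub_tvDist {ι : Type*} {l : Filter ι} [l.NeBot] {r : ι → ℝ}
    (hr : ∀ i, 0 < r i) {Ω : ι → Type*} [∀ i, MeasurableSpace (Ω i)]
    {P Q : ∀ i, Measure (Ω i)} [∀ i, IsProbabilityMeasure (P i)] [∀ i, SigmaFinite (Q i)]
    (hPQ : ∀ i, P i ≪ Q i) (hQP : ∀ i, Q i ≪ P i) {x : EReal}
    (hx : ∀ ε : ℝ, 0 < ε → x ≤ liminf (fun i => (r i : EReal)⁻¹ *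
      ENNReal.log (P i {y | (r i)⁻¹ * entropyProduction (P i) (Q i) y ∈ Iio ε})) l) :
    x ≤ liminf (fun i => (r i : EReal)⁻¹ * ENNReal.log (1 - tvDist (P i) (Q i))) l := by
  refine EReal.le_of_forall_pos_neg_add_le fun ε hε => ?_
  calc _ ≤ liminf (fun _ => ((-ε : ℝ) : EReal)) l + liminf (fun i => (r i : EReal)⁻¹ *
          ENNReal.log (P i {y | (r i)⁻¹ * entropyProduction (P i) (Q i) y ∈ Iio ε})) l := by
        rw [liminf_const]
        exact add_le_add le_rfl (hx ε hε)
    _ ≤ _ := EReal.le_liminf_add.trans (liminf_le_liminf (.of_forall fun i =>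
        neg_add_log_measure_le_log_one_sub_tvDist (hPQ i) (hQP i) (hr i) hε.le))

theorem chernoff_exponents_coincide_general
    {ι : Type*} (l : Filter ι) [l.NeBot]
    (r : ι → ℝ) (hrpos : ∀ i, 0 < r i)
    (Ω : ι → Type*) [∀ i, MeasurableSpace (Ω i)]
    (P Phat : ∀ i, Measure (Ω i))
    (hPprob : ∀ i, IsProbabilityMeasure (P i))
    (hPhatprob : ∀ i, IsProbabilityMeasure (Phat i))
    (hac : ∀ i, P i ≪ Phat i) (hac' : ∀ i, Phat i ≪ P i)
    (I : ℝ → ℝ≥0∞)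
    (hIconv : ∀ x y p q : ℝ, 0 ≤ p → 0 ≤ q → p + q = 1 →
      I (p * x + q * y) ≤ ENNReal.ofReal p * I x + ENNReal.ofReal q * I y)
    (hIlsc : LowerSemicontinuous I)
    (hLDPlower : ∀ U : Set ℝ, IsOpen U →
      -(⨅ s ∈ U, (I s : EReal))
        ≤ liminf (fun i => ((r i)⁻¹ : EReal) *
            ENNReal.log (P i {x | (r i)⁻¹ * entropyProduction (P i) (Phat i) x ∈ U})) l)
    (e : ℝ → EReal)
    (he : ∀ α : ℝ, e α = ⨆ s : ℝ, ((α * s : ℝ) : EReal) - (I (-s) : EReal))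
    (helim : ∀ α ∈ Set.Icc (0 : ℝ) 1,
      Tendsto (fun i => ((r i)⁻¹ : EReal) *
          ENNReal.log (∫⁻ x, ENNReal.ofReal
            (Real.exp (-α * entropyProduction (P i) (Phat i) x)) ∂(P i))) l (nhds (e α))) :
    Tendsto (fun i => ((r i)⁻¹ : EReal) * ENNReal.log (1 - tvDist (P i) (Phat i))) l
        (nhds (-(I 0 : EReal)))
    ∧ -(I 0 : EReal) = ⨅ α ∈ Set.Icc (0 : ℝ) 1, e α := by
  obtain rfl : e = entropicPressure I := funext he
  have hpressure_zero (α : ℝ) (hα : α ∈ Icc (0 : ℝ) 1) (hint : ∀ i, ∫⁻ x, ENNReal.ofReal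
      (Real.exp (-α * entropyProduction (P i) (Phat i) x)) ∂(P i) = 1) :
      entropicPressure I α = 0 :=
    tendsto_nhds_unique (helim α hα) <| by
      simp only [hint, ENNReal.log_one, mul_zero]
      exact tendsto_const_nhds
  have h0 := hpressure_zero 0 ⟨le_rfl, zero_le_one⟩ fun i => by simp
  have h1 := hpressure_zero 1 ⟨zero_le_one, le_rfl⟩ fun i => by
    simpa using lintegral_exp_neg_entropyProduction (hac i) (hac' i)
  have hinf := neg_eq_iInf_entropicPressure hIconv hIlsc h0 h1
  refine ⟨tendsto_of_le_liminf_of_limsup_le ?_ ?_, hinf⟩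
  · exact le_liminf_log_one_sub_tvDist hrpos hac hac' fun ε hε =>
      (EReal.neg_le_neg_iff.2 (iInf₂_le 0 hε)).trans (hLDPlower _ isOpen_Iio)
  · rw [hinf]
    exact le_iInf₂ fun α hα => (limsup_le_limsup (.of_forall fun i =>
      log_one_sub_tvDist_le_log_lintegral (hac i) (hac' i) (hrpos i).le hα)).trans_eq
        (helim α hα).limsup_eq

/-- **Chernoff exponents via the entropic pressure.**
Assume `I : ℝ → [0,+∞]` is convex and lower semicontinuous, the large-deviation lower
bound holds for the laws of `r_λ⁻¹σ_λ` under `P_λ`, and the entropic pressure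
`e(α) = sup_s (αs − I(−s))` equals `lim r_λ⁻¹ log ∫ e^{−ασ_λ} dP_λ` for `α ∈ [0,1]`.
Then the Chernoff exponents coincide: `lim r_λ⁻¹ log (1 − ‖P_λ−P̂_λ‖_var)` exists and
equals `−I(0) = inf_{α∈[0,1]} e(α)`. -/
theorem chernoff_exponents_coincide
    {ι : Type*} (l : Filter ι) [l.NeBot]
    (r : ι → ℝ) (hrpos : ∀ i, 0 < r i) (hr : Tendsto r l atTop)
    (Ω : ι → Type*) [∀ i, MeasurableSpace (Ω i)]
    (P Phat : ∀ i, Measure (Ω i))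
    (hPprob : ∀ i, IsProbabilityMeasure (P i))
    (hPhatprob : ∀ i, IsProbabilityMeasure (Phat i))
    (hac : ∀ i, P i ≪ Phat i) (hac' : ∀ i, Phat i ≪ P i)
    (I : ℝ → ℝ≥0∞)
    (hIconv : ∀ x y p q : ℝ, 0 ≤ p → 0 ≤ q → p + q = 1 →
      I (p * x + q * y) ≤ ENNReal.ofReal p * I x + ENNReal.ofReal q * I y)
    (hIlsc : LowerSemicontinuous I)
    (hLDPlower : ∀ U : Set ℝ, IsOpen U →
      -(⨅ s ∈ U, (I s : EReal))
        ≤ liminf (fun i => ((r i)⁻¹ : EReal) *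
            ENNReal.log (P i {x | (r i)⁻¹ * entropyProduction (P i) (Phat i) x ∈ U})) l)
    (e : ℝ → EReal)
    (he : ∀ α : ℝ, e α = ⨆ s : ℝ, ((α * s : ℝ) : EReal) - (I (-s) : EReal))
    (helim : ∀ α ∈ Set.Icc (0 : ℝ) 1,
      Tendsto (fun i => ((r i)⁻¹ : EReal) *
          ENNReal.log (∫⁻ x, ENNReal.ofReal
            (Real.exp (-α * entropyProduction (P i) (Phat i) x)) ∂(P i))) l (nhds (e α))) :
    Tendsto (fun i => ((r i)⁻¹ : EReal) * ENNReal.log (1 - tvDist (P i) (Phat i))) l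
        (nhds (-(I 0 : EReal)))
    ∧ -(I 0 : EReal) = ⨅ α ∈ Set.Icc (0 : ℝ) 1, e α :=
  chernoff_exponents_coincide_general l r hrpos Ω P Phat hPprob hPhatprob hac hac' I hIconv hIlsc
    hLDPlower e he helim
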